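/- arXiv:2306.15048 — 3 statements merged into one kernel-verified Lean document; each statement's English description precedes it below -/
import Mathlib

section
/- Let U be uniformly distributed on (0,1), F0 and F1 cdfs with Q0 the left-continuous quantile function of F0, and Y1 a random variable with cdf F1 on the same probability space. Then for all 0 ≤ a < b ≤ 1, P(a < U < b and Q0(U) < Y1) ≤ (b - a) - sup over x in (a,b) of max(b - x - 1 + F1(Q0(x)), 0). -/
/-!
For `x ∈ (a, b)`, the event `{x ≤ U < b, Y1 ≤ Q0 x}` lies in `{a < U < b}` and, since `Q0` is
monotone, is disjoint from the winners `{Q0 U < Y1}` there. By the Fréchet lower bound its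
probability is at least `(b - x) + F1 (Q0 x) - 1`, and it is nonnegative; so the winners in
`(a, b)` have probability at most `(b - a) - max (b - x - 1 + F1 (Q0 x)) 0` for every such `x`.
-/

open MeasureTheory Set Filter Function

noncomputable section

/-- `F` is a cumulative distribution function. -/
def IsCDF (F : ℝ → ℝ) : Prop :=
  Monotone F ∧ (∀ y, ContinuousWithinAt F (Set.Ici y) y) ∧
    Tendsto F atBot (nhds 0) ∧ Tendsto F atTop (nhds 1)

namespace IsCDF

variable {F : ℝ → ℝ}

lemma nonempty_setOf_le (hF : IsCDF F) {v : ℝ} (hv : v < 1) : {y | v ≤ F y}.Nonempty :=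
  ((hF.2.2.2.eventually (eventually_gt_nhds hv)).exists).imp fun _ hy => hy.le

lemma bddBelow_setOf_le (hF : IsCDF F) {u : ℝ} (hu : 0 < u) : BddBelow {y | u ≤ F y} := by
  obtain ⟨y₀, hy₀⟩ := (hF.2.2.1.eventually (eventually_lt_nhds hu)).exists
  exact ⟨y₀, fun y hy => le_of_not_gt fun hlt => (hy.trans (hF.1 hlt.le)).not_gt hy₀⟩

lemma monotoneOn_sInf_setOf_le (hF : IsCDF F) :
    MonotoneOn (fun u => sInf {y | u ≤ F y}) (Ioo 0 1) := fun _ hu _ hv huv =>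
  csInf_le_csInf (hF.bddBelow_setOf_le hu.1) (hF.nonempty_setOf_le hv.2)
    fun _ hy => huv.trans hy

end IsCDF

section Probability

variable {Ω : Type*} [MeasurableSpace Ω] {μ : Measure Ω}

lemma measureReal_preimage_of_map_eq_restrict {α : Type*} [MeasurableSpace α] {ν : Measure α}
    {X : Ω → α} {s t : Set α} (hX : Measurable X) (hlaw : μ.map X = ν.restrict t)
    (hs : MeasurableSet s) (hst : s ⊆ t) : μ.real (X ⁻¹' s) = ν.real s := by
  rw [← map_measureReal_apply hX hs, hlaw, measureReal_def, measureReal_def,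
    Measure.restrict_eq_self _ hst]

variable [IsProbabilityMeasure μ]

lemma add_sub_one_le_measureReal_inter {s t : Set Ω} (ht : MeasurableSet t) :
    μ.real s + μ.real t - 1 ≤ μ.real (s ∩ t) := by
  have := measureReal_union_add_inter (μ := μ) (s := s) ht
  linarith [measureReal_le_one (μ := μ) (s := s ∪ t)]

lemma measureReal_winners_add_le {U Y1 : Ω → ℝ} {Q0 : ℝ → ℝ} {a b x : ℝ}
    (hQ0 : MonotoneOn Q0 (Ioo 0 1)) (hU : Measurable U)
    (hUlaw : μ.map U = volume.restrict (Ioo 0 1)) (hY1 : Measurable Y1) (ha : 0 ≤ a)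
    (hb : b ≤ 1) (hx : x ∈ Ioo a b) :
    μ.real {ω | (a < U ω ∧ U ω < b) ∧ Q0 (U ω) < Y1 ω} +
      max (b - x - 1 + μ.real {ω | Y1 ω ≤ Q0 x}) 0 ≤ b - a := by
  set W := {ω | (a < U ω ∧ U ω < b) ∧ Q0 (U ω) < Y1 ω}
  set L := U ⁻¹' Ico x b ∩ {ω | Y1 ω ≤ Q0 x}
  have hx0 : 0 < x := ha.trans_lt hx.1
  have hL : MeasurableSet L := (hU measurableSet_Ico).inter (hY1 measurableSet_Iic)
  have hdisj : Disjoint W L := disjoint_left.2 fun ω ⟨_, hwin⟩ ⟨⟨hxU, hUb⟩, hY⟩ =>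
    have hQ : Q0 x ≤ Q0 (U ω) :=
      hQ0 ⟨hx0, hx.2.trans_le hb⟩ ⟨hx0.trans_le hxU, hUb.trans_le hb⟩ hxU
    (hY.trans hQ).not_gt hwin
  have hsub : W ∪ L ⊆ U ⁻¹' Ioo a b :=
    union_subset (fun _ hω => hω.1) fun _ hω => ⟨hx.1.trans_le hω.1.1, hω.1.2⟩
  have hIoo : μ.real (U ⁻¹' Ioo a b) = b - a := by
    rw [measureReal_preimage_of_map_eq_restrict hU hUlaw measurableSet_Ioo
      (Ioo_subset_Ioo ha hb), Real.volume_real_Ioo, max_eq_left (sub_nonneg.2 (hx.1.trans hx.2).le)]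
  have hIco : μ.real (U ⁻¹' Ico x b) = b - x := by
    rw [measureReal_preimage_of_map_eq_restrict hU hUlaw measurableSet_Ico
      fun _ hu => ⟨hx0.trans_le hu.1, hu.2.trans_le hb⟩,
      Real.volume_real_Ico, max_eq_left (sub_nonneg.2 hx.2.le)]
  have hL_ge : b - x - 1 + μ.real {ω | Y1 ω ≤ Q0 x} ≤ μ.real L := by
    linarith [add_sub_one_le_measureReal_inter (μ := μ) (s := U ⁻¹' Ico x b)
      (t := {ω | Y1 ω ≤ Q0 x}) (hY1 measurableSet_Iic)]
  calc _ ≤ μ.real W + μ.real L := add_le_add_right (max_le hL_ge measureReal_nonneg) _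
    _ = μ.real (W ∪ L) := (measureReal_union hdisj hL).symm
    _ ≤ μ.real (U ⁻¹' Ioo a b) := measureReal_mono hsub
    _ = b - a := hIoo

end Probability

theorem winner_subgroup_upper_bound_general
    {Ω : Type*} [MeasurableSpace Ω] (μ : Measure Ω) [IsProbabilityMeasure μ]
    (U Y1 : Ω → ℝ) (F0 F1 Q0 : ℝ → ℝ)
    (hF0 : IsCDF F0)
    (hQ0 : ∀ u, Q0 u = sInf {y : ℝ | u ≤ F0 y})
    (hU : Measurable U) (hUlaw : μ.map U = volume.restrict (Set.Ioo (0:ℝ) 1))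
    (hY1 : Measurable Y1) (hY1law : ∀ y, (μ {ω | Y1 ω ≤ y}).toReal = F1 y)
    (a b : ℝ) (ha : 0 ≤ a) (hab : a < b) (hb : b ≤ 1)
 :
    (μ {ω | (a < U ω ∧ U ω < b) ∧ Q0 (U ω) < Y1 ω}).toReal ≤
      (b - a) - ⨆ x ∈ Set.Ioo a b, max (b - x - 1 + F1 (Q0 x)) 0 := by
  set W := {ω | (a < U ω ∧ U ω < b) ∧ Q0 (U ω) < Y1 ω}
  have hQ0mono : MonotoneOn Q0 (Ioo 0 1) := funext hQ0 ▸ hF0.monotoneOn_sInf_setOf_le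
  have hwin (x : ℝ) (hx : x ∈ Ioo a b) :
      μ.real W + max (b - x - 1 + F1 (Q0 x)) 0 ≤ b - a := by
    rw [← hY1law]
    exact measureReal_winners_add_le hQ0mono hU hUlaw hY1 ha hb hx
  have hnonneg : 0 ≤ (b - a) - μ.real W := sub_nonneg.2 <|
    (le_add_of_nonneg_right (le_max_right _ _)).trans
      (hwin _ ⟨left_lt_add_div_two.2 hab, add_div_two_lt_right.2 hab⟩)
  have hsup : ⨆ x ∈ Ioo a b, max (b - x - 1 + F1 (Q0 x)) 0 ≤ (b - a) - μ.real W :=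
    Real.iSup_le (fun x => Real.iSup_le (fun hx => by linarith [hwin x hx]) hnonneg) hnonneg
  rw [← measureReal_def]
  linarith

theorem winner_subgroup_upper_bound
    {Ω : Type*} [MeasurableSpace Ω] (μ : Measure Ω) [IsProbabilityMeasure μ]
    (U Y1 : Ω → ℝ) (F0 F1 Q0 : ℝ → ℝ)
    (hF0 : IsCDF F0) (hF1 : IsCDF F1)
    (hQ0 : ∀ u, Q0 u = sInf {y : ℝ | u ≤ F0 y})
    (hU : Measurable U) (hUlaw : μ.map U = volume.restrict (Set.Ioo (0:ℝ) 1))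
    (hY1 : Measurable Y1) (hY1law : ∀ y, (μ {ω | Y1 ω ≤ y}).toReal = F1 y)
    (a b : ℝ) (ha : 0 ≤ a) (hab : a < b) (hb : b ≤ 1)
 :
    (μ {ω | (a < U ω ∧ U ω < b) ∧ Q0 (U ω) < Y1 ω}).toReal ≤
      (b - a) - ⨆ x ∈ Set.Ioo a b, max (b - x - 1 + F1 (Q0 x)) 0 :=
  winner_subgroup_upper_bound_general μ U Y1 F0 F1 Q0 hF0 hQ0 hU hUlaw hY1 hY1law a b ha hab hb
end
end

section
/- Let U be uniformly distributed on (0,1), F0 and F1 cdfs with Q0 the left-continuous quantile of F0, and Y1 a random variable with cdf F1 on the same probability space. Then for all 0 ≤ a < b ≤ 1, P(a < U < b and Y1 < Q0(U)) ≤ (b - a) - sup over x in (a,b) of max(x - a - F1(Q0(x)-), 0). -/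
open MeasureTheory Set Filter Function

noncomputable section

/-! For any cut point `x ∈ (a, b)`, a loser with `U ≤ x` has `Y1 < Q0 U ≤ Q0 x` by monotonicity of
the quantile, so the losers in `(a, b)` are covered by `{x < U < b}`, of probability `b - x`, and
`{Y1 < Q0 x}`, of probability `F1 (Q0 x -)`. Hence their probability is at most
`(b - a) - (x - a - F1 (Q0 x -))`, and trivially at most `b - a`. -/

theorem monotoneOn_sInf_setOf_le {F : ℝ → ℝ} (hF : Monotone F)
    (hbot : Tendsto F atBot (nhds 0)) (htop : Tendsto F atTop (nhds 1)) :
    MonotoneOn (fun u => sInf {y | u ≤ F y}) (Ioo 0 1) := by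
  intro u hu v hv huv
  have hbdd : BddBelow {y | u ≤ F y} := by
    obtain ⟨y₀, hy₀⟩ := (hbot.eventually_lt_const hu.1).exists
    exact ⟨y₀, fun z hz => le_of_not_gt fun hzy => (hz.trans (hF hzy.le)).not_gt hy₀⟩
  have hne : {y | v ≤ F y}.Nonempty := (htop.eventually_const_lt hv.2).exists.imp fun _ => le_of_lt
  exact csInf_le_csInf hbdd hne fun z hz => huv.trans hz

theorem measure_preimage_eq_of_map_eq_restrict {Ω α : Type*} [MeasurableSpace Ω]
    [MeasurableSpace α] {μ : Measure Ω} {ν : Measure α} {U : Ω → α} {s t : Set α}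
    (hU : Measurable U) (hUlaw : μ.map U = ν.restrict s) (ht : MeasurableSet t) (hts : t ⊆ s) :
    μ (U ⁻¹' t) = ν t := by
  rw [← Measure.map_apply hU ht, hUlaw, Measure.restrict_apply ht, inter_eq_self_of_subset_left hts]

theorem measureReal_preimage_Ioo_of_map_eq_uniform {Ω : Type*} [MeasurableSpace Ω]
    {μ : Measure Ω} {U : Ω → ℝ} (hU : Measurable U)
    (hUlaw : μ.map U = volume.restrict (Ioo (0 : ℝ) 1)) {c d : ℝ} (hc : 0 ≤ c) (hcd : c ≤ d)
    (hd : d ≤ 1) : μ.real (U ⁻¹' Ioo c d) = d - c := by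
  rw [measureReal_def, measure_preimage_eq_of_map_eq_restrict hU hUlaw measurableSet_Ioo
    (Ioo_subset_Ioo hc hd), Real.volume_Ioo, ENNReal.toReal_ofReal (sub_nonneg.2 hcd)]

section CDF

variable {Ω : Type*} [MeasurableSpace Ω] {μ : Measure Ω} [IsFiniteMeasure μ] {Y : Ω → ℝ}
  {F : ℝ → ℝ}

theorem monotone_of_measureReal_le_eq (hF : ∀ y, μ.real {ω | Y ω ≤ y} = F y) : Monotone F :=
  fun y z hyz => hF y ▸ hF z ▸ measureReal_mono fun _ hω => le_trans hω hyz

theorem measureReal_lt_le_leftLim (hF : ∀ y, μ.real {ω | Y ω ≤ y} = F y) (y : ℝ) :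
    μ.real {ω | Y ω < y} ≤ leftLim F y := by
  have hmono := monotone_of_measureReal_le_eq hF
  set s : ℕ → Set Ω := fun n => {ω | Y ω ≤ y - 1 / (n + 1)}
  have hs : Monotone s := fun m n hmn ω (hω : Y ω ≤ _) => show Y ω ≤ _ from
    hω.trans (sub_le_sub_left (Nat.one_div_le_one_div hmn) y)
  have hunion : ⋃ n, s n = {ω | Y ω < y} := by
    ext ω
    simp only [s, mem_iUnion, mem_ofPred_eq]
    refine ⟨fun ⟨n, hn⟩ => hn.trans_lt (sub_lt_self y Nat.one_div_pos_of_nat), fun hω => ?_⟩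
    obtain ⟨n, hn⟩ := exists_nat_one_div_lt (sub_pos.2 hω)
    exact ⟨n, by linarith⟩
  have hs_le : ∀ n, μ (s n) ≤ ENNReal.ofReal (leftLim F y) := fun n => by
    rw [← ofReal_measureReal, hF]
    exact ENNReal.ofReal_le_ofReal (hmono.le_leftLim (sub_lt_self y Nat.one_div_pos_of_nat))
  have hnonneg : 0 ≤ leftLim F y :=
    (hF (y - 1) ▸ measureReal_nonneg).trans (hmono.le_leftLim (sub_one_lt y))
  rw [← hunion, measureReal_def, hs.measure_iUnion]
  exact ENNReal.toReal_le_of_le_ofReal hnonneg (iSup_le hs_le)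

end CDF

theorem loser_subgroup_upper_bound_general
    {Ω : Type*} [MeasurableSpace Ω] (μ : Measure Ω) [IsProbabilityMeasure μ]
    (U Y1 : Ω → ℝ) (F0 F1 Q0 : ℝ → ℝ)
    (hF0 : IsCDF F0)
    (hQ0 : ∀ u, Q0 u = sInf {y : ℝ | u ≤ F0 y})
    (hU : Measurable U) (hUlaw : μ.map U = volume.restrict (Set.Ioo (0:ℝ) 1))
    (hY1law : ∀ y, (μ {ω | Y1 ω ≤ y}).toReal = F1 y)
    (a b : ℝ) (ha : 0 ≤ a) (hab : a < b) (hb : b ≤ 1)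
 :
    (μ {ω | (a < U ω ∧ U ω < b) ∧ Y1 ω < Q0 (U ω)}).toReal ≤
      (b - a) - ⨆ x ∈ Set.Ioo a b, max (x - a - leftLim F1 (Q0 x)) 0 := by
  obtain ⟨hF0_mono, -, hF0_bot, hF0_top⟩ := hF0
  have hQ0_mono : MonotoneOn Q0 (Ioo 0 1) := by
    simpa only [← funext hQ0] using monotoneOn_sInf_setOf_le hF0_mono hF0_bot hF0_top
  set E := {ω | (a < U ω ∧ U ω < b) ∧ Y1 ω < Q0 (U ω)}
  have hE_le : μ.real E ≤ b - a :=
    (measureReal_mono fun _ hω => hω.1).trans_eq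
      (measureReal_preimage_Ioo_of_map_eq_uniform hU hUlaw ha hab.le hb)
  have hE_le_of_mem : ∀ x ∈ Ioo a b, μ.real E ≤ (b - x) + leftLim F1 (Q0 x) := by
    rintro x ⟨hax, hxb⟩
    have hsub : E ⊆ U ⁻¹' Ioo x b ∪ {ω | Y1 ω < Q0 x} := by
      rintro ω ⟨⟨haU, hUb⟩, hY⟩
      by_cases hxU : x < U ω
      · exact Or.inl ⟨hxU, hUb⟩
      · exact Or.inr (hY.trans_le (hQ0_mono ⟨ha.trans_lt haU, hUb.trans_le hb⟩
          ⟨ha.trans_lt hax, hxb.trans_le hb⟩ (not_lt.1 hxU)))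
    calc μ.real E ≤ μ.real (U ⁻¹' Ioo x b) + μ.real {ω | Y1 ω < Q0 x} :=
          (measureReal_mono hsub).trans (measureReal_union_le _ _)
      _ ≤ (b - x) + leftLim F1 (Q0 x) := by
          gcongr
          · exact (measureReal_preimage_Ioo_of_map_eq_uniform hU hUlaw (ha.trans hax.le)
              hxb.le hb).le
          · exact measureReal_lt_le_leftLim hY1law _
  rw [← measureReal_def, le_sub_comm]
  refine Real.iSup_le (fun x => Real.iSup_le (fun hx => max_le ?_ ?_) ?_) ?_
  · linarith [hE_le_of_mem x hx]
  all_goals linarith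

theorem loser_subgroup_upper_bound
    {Ω : Type*} [MeasurableSpace Ω] (μ : Measure Ω) [IsProbabilityMeasure μ]
    (U Y1 : Ω → ℝ) (F0 F1 Q0 : ℝ → ℝ)
    (hF0 : IsCDF F0) (hF1 : IsCDF F1)
    (hQ0 : ∀ u, Q0 u = sInf {y : ℝ | u ≤ F0 y})
    (hU : Measurable U) (hUlaw : μ.map U = volume.restrict (Set.Ioo (0:ℝ) 1))
    (hY1 : Measurable Y1) (hY1law : ∀ y, (μ {ω | Y1 ω ≤ y}).toReal = F1 y)
    (a b : ℝ) (ha : 0 ≤ a) (hab : a < b) (hb : b ≤ 1)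
 :
    (μ {ω | (a < U ω ∧ U ω < b) ∧ Y1 ω < Q0 (U ω)}).toReal ≤
      (b - a) - ⨆ x ∈ Set.Ioo a b, max (x - a - leftLim F1 (Q0 x)) 0 :=
  loser_subgroup_upper_bound_general μ U Y1 F0 F1 Q0 hF0 hQ0 hU hUlaw hY1law a b ha hab hb
end
end

section
/- Let Q0, Q1 be left-continuous quantile functions of cdfs F0, F1 and 0 ≤ a < b ≤ 1. For Y0 = Q0(U), U ~ Uniform(0,1), and Y1 with cdf F1 under any coupling, ∫_a^b [Q1(u-a) - Q0(u)] du ≤ E[(Y1 - Y0) · 1{a < U < b}] ≤ ∫_a^b [Q1(1 + a - u) - Q0(u)] du. -/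
open MeasureTheory Set Filter Function

noncomputable section

/-!
On the event `A = {a < U < b}`, of probability `b - a`, the joint law of `(U, Y1)` enters only
through the level sets: for every `t`, `μ (A ∩ {t < Y1})` lies between the Fréchet bounds
`b - a - F1 t` and `min (b - a) (1 - F1 t)`, and these are exactly the measures of
`A ∩ {t < Q1 (U - a)}` and `A ∩ {t < Q1 (1 + a - U)}`. Writing `X - V` as
`∫ t, 1{t < X} - 1{t < V}` and applying Fubini turns these comparisons of level sets into
comparisons of integrals over `A`, which the change of variables `u = U` identifies with the
interval integrals. The term `Q0 (U)` is common to both sides and cancels.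
-/

def quantile (F : ℝ → ℝ) (u : ℝ) : ℝ := sInf {y | u ≤ F y}

namespace IsCDF

variable {F : ℝ → ℝ}

theorem nonneg (hF : IsCDF F) (y : ℝ) : 0 ≤ F y := hF.1.le_of_tendsto hF.2.2.1 y

theorem quantile_le_iff (hF : IsCDF F) {u : ℝ} (hu : u ∈ Ioo 0 1) (t : ℝ) :
    quantile F u ≤ t ↔ u ≤ F t := by
  obtain ⟨hmono, hright, hbot, htop⟩ := hF
  have hne : {y | u ≤ F y}.Nonempty :=
    (htop.eventually (eventually_gt_nhds hu.2)).exists.imp fun _ => le_of_lt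
  have hbdd : BddBelow {y | u ≤ F y} := by
    obtain ⟨y₀, hy₀⟩ := eventually_atBot.1 (hbot.eventually (eventually_lt_nhds hu.1))
    exact ⟨y₀, fun y hy => not_lt.1 fun hlt => (hy₀ y hlt.le).not_ge hy⟩
  refine ⟨fun h => ?_, fun h => csInf_le hbdd h⟩
  refine ge_of_tendsto ((hright t).mono Ioi_subset_Ici_self)
    (eventually_nhdsWithin_of_forall fun s hs => ?_)
  obtain ⟨y, hy, hys⟩ := exists_lt_of_csInf_lt hne (h.trans_lt hs)
  exact hy.trans (hmono hys.le)

theorem lt_quantile_iff (hF : IsCDF F) {u : ℝ} (hu : u ∈ Ioo 0 1) (t : ℝ) :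
    t < quantile F u ↔ F t < u := by
  simpa only [not_le] using (hF.quantile_le_iff hu t).not

end IsCDF

theorem integrable_indicator_one {α : Type*} [MeasurableSpace α] {μ : Measure α} {s : Set α}
    (hs : MeasurableSet s) (hμs : μ s ≠ ⊤) : Integrable (s.indicator (1 : α → ℝ)) μ :=
  (integrable_indicator_iff hs).2 (integrableOn_const hμs)

theorem indicator_Iio_sub_indicator_Iio (x v t : ℝ) :
    ((Iio x).indicator 1 t - (Iio v).indicator 1 t : ℝ) =
      (Ico v x).indicator 1 t - (Ico x v).indicator 1 t := by
  by_cases hx : t < x <;> by_cases hv : t < v <;> simp [hx, hv, not_lt.1]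

theorem integrable_indicator_Iio_sub_indicator_Iio (x v : ℝ) :
    Integrable fun t => ((Iio x).indicator 1 t - (Iio v).indicator 1 t : ℝ) := by
  simp_rw [indicator_Iio_sub_indicator_Iio]
  exact (integrable_indicator_one measurableSet_Ico (by simp)).sub
    (integrable_indicator_one measurableSet_Ico (by simp))

theorem integral_indicator_Iio_sub_indicator_Iio (x v : ℝ) :
    ∫ t, ((Iio x).indicator 1 t - (Iio v).indicator 1 t : ℝ) = x - v := by
  simp_rw [indicator_Iio_sub_indicator_Iio]
  rw [integral_sub (integrable_indicator_one measurableSet_Ico (by simp))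
      (integrable_indicator_one measurableSet_Ico (by simp)),
    integral_indicator_one measurableSet_Ico, integral_indicator_one measurableSet_Ico,
    Real.volume_real_Ico, Real.volume_real_Ico, ← neg_sub x v, max_zero_sub_max_neg_zero_eq_self]

theorem integral_norm_indicator_Iio_sub_indicator_Iio (x v : ℝ) :
    ∫ t, ‖((Iio x).indicator 1 t - (Iio v).indicator 1 t : ℝ)‖ = |x - v| := by
  have h (t : ℝ) : ‖((Iio x).indicator 1 t - (Iio v).indicator 1 t : ℝ)‖ =
      (Ico (min x v) (max x v)).indicator 1 t := by
    by_cases hx : t < x <;> by_cases hv : t < v <;> simp [hx, hv, not_lt.1]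
  simp_rw [h, integral_indicator_one measurableSet_Ico, Real.volume_real_Ico_of_le min_le_max,
    max_sub_min_eq_abs']

section LayerCake

variable {Ω : Type*} [MeasurableSpace Ω] {ν : Measure Ω} [IsFiniteMeasure ν] {X V : Ω → ℝ}

theorem integral_sub_eq_integral_measureReal_lt_sub (hX : Measurable X) (hV : Measurable V)
    (hXV : Integrable (fun ω => X ω - V ω) ν) :
    ∫ ω, X ω - V ω ∂ν = ∫ t, ν.real {ω | t < X ω} - ν.real {ω | t < V ω} := by
  set G : Ω → ℝ → ℝ := fun ω t => (Iio (X ω)).indicator 1 t - (Iio (V ω)).indicator 1 t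
  have hXt (t : ℝ) : MeasurableSet {ω | t < X ω} := measurableSet_lt measurable_const hX
  have hVt (t : ℝ) : MeasurableSet {ω | t < V ω} := measurableSet_lt measurable_const hV
  have hG : Integrable (uncurry G) (ν.prod volume) := by
    have hmeas : Measurable (uncurry G) :=
      (measurable_const.indicator (measurableSet_lt measurable_snd (hX.comp measurable_fst))).sub
        (measurable_const.indicator (measurableSet_lt measurable_snd (hV.comp measurable_fst)))
    refine (integrable_prod_iff hmeas.aestronglyMeasurable).2
      ⟨ae_of_all _ fun ω => integrable_indicator_Iio_sub_indicator_Iio (X ω) (V ω), ?_⟩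
    simpa only [uncurry_apply_pair, G, integral_norm_indicator_Iio_sub_indicator_Iio] using hXV.abs
  calc ∫ ω, X ω - V ω ∂ν = ∫ ω, (∫ t, G ω t) ∂ν := by
        simp only [G, integral_indicator_Iio_sub_indicator_Iio]
    _ = ∫ t, ∫ ω, G ω t ∂ν := integral_integral_swap hG
    _ = ∫ t, ν.real {ω | t < X ω} - ν.real {ω | t < V ω} := by
        congr 1 with t
        change ∫ ω, ({ω | t < X ω}.indicator 1 ω - {ω | t < V ω}.indicator 1 ω : ℝ) ∂ν = _
        rw [integral_sub (integrable_indicator_one (hXt t) (measure_ne_top _ _))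
            (integrable_indicator_one (hVt t) (measure_ne_top _ _)),
          integral_indicator_one (hXt t), integral_indicator_one (hVt t)]

theorem integral_sub_nonneg_of_measure_lt_le (hX : AEMeasurable X ν) (hV : AEMeasurable V ν)
    (hXV : Integrable (fun ω => X ω - V ω) ν) (h : ∀ t, ν {ω | t < V ω} ≤ ν {ω | t < X ω}) :
    0 ≤ ∫ ω, X ω - V ω ∂ν := by
  have hmk : (fun ω => X ω - V ω) =ᵐ[ν] fun ω => hX.mk X ω - hV.mk V ω :=
    hX.ae_eq_mk.sub hV.ae_eq_mk
  have hlevel {W : Ω → ℝ} (hW : AEMeasurable W ν) (t : ℝ) :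
      ν {ω | t < W ω} = ν {ω | t < hW.mk W ω} :=
    measure_congr (hW.ae_eq_mk.preimage (Ioi t))
  rw [integral_congr_ae hmk, integral_sub_eq_integral_measureReal_lt_sub hX.measurable_mk
    hV.measurable_mk (hXV.congr hmk)]
  refine integral_nonneg fun t => sub_nonneg.2 ?_
  rw [measureReal_def, measureReal_def, ← hlevel, ← hlevel]
  exact ENNReal.toReal_mono (measure_ne_top _ _) (h t)

end LayerCake

section UniformLaw

variable {Ω : Type*} [MeasurableSpace Ω] {μ : Measure Ω} {U : Ω → ℝ} {a b : ℝ}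

theorem measure_preimage_Ioo_of_map_eq (hU : Measurable U)
    (hUlaw : μ.map U = volume.restrict (Ioo 0 1)) (ha : 0 ≤ a) (hb : b ≤ 1) :
    μ (U ⁻¹' Ioo a b) = ENNReal.ofReal (b - a) := by
  rw [← Measure.map_apply hU measurableSet_Ioo, hUlaw, Measure.restrict_apply measurableSet_Ioo,
    inter_eq_left.2 (Ioo_subset_Ioo ha hb), Real.volume_Ioo]

theorem map_restrict_preimage_Ioo_of_map_eq (hU : Measurable U)
    (hUlaw : μ.map U = volume.restrict (Ioo 0 1)) (ha : 0 ≤ a) (hb : b ≤ 1) :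
    (μ.restrict (U ⁻¹' Ioo a b)).map U = volume.restrict (Ioo a b) := by
  rw [← Measure.restrict_map hU measurableSet_Ioo, hUlaw,
    Measure.restrict_restrict measurableSet_Ioo, inter_eq_left.2 (Ioo_subset_Ioo ha hb)]

theorem integrableOn_preimage_Ioo_comp_of_map_eq (hU : Measurable U)
    (hUlaw : μ.map U = volume.restrict (Ioo 0 1)) (ha : 0 ≤ a) (hb : b ≤ 1) {f : ℝ → ℝ}
    (hf : IntervalIntegrable f volume a b) :
    IntegrableOn (fun ω => f (U ω)) (U ⁻¹' Ioo a b) μ := by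
  have hf' : Integrable f ((μ.restrict (U ⁻¹' Ioo a b)).map U) := by
    rw [map_restrict_preimage_Ioo_of_map_eq hU hUlaw ha hb]
    exact hf.1.mono_set Ioo_subset_Ioc_self
  exact (integrable_map_measure hf'.aestronglyMeasurable hU.aemeasurable).1 hf'

theorem setIntegral_preimage_Ioo_comp_of_map_eq (hU : Measurable U)
    (hUlaw : μ.map U = volume.restrict (Ioo 0 1)) (ha : 0 ≤ a) (hab : a ≤ b) (hb : b ≤ 1)
    {f : ℝ → ℝ} (hf : IntervalIntegrable f volume a b) :
    ∫ ω in U ⁻¹' Ioo a b, f (U ω) ∂μ = ∫ u in a..b, f u := by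
  have hf' : AEStronglyMeasurable f ((μ.restrict (U ⁻¹' Ioo a b)).map U) := by
    rw [map_restrict_preimage_Ioo_of_map_eq hU hUlaw ha hb]
    exact (hf.1.mono_set Ioo_subset_Ioc_self).aestronglyMeasurable
  rw [intervalIntegral.integral_of_le hab, integral_Ioc_eq_integral_Ioo,
    ← integral_map hU.aemeasurable hf', map_restrict_preimage_Ioo_of_map_eq hU hUlaw ha hb]

end UniformLaw

section QuantileCoupling

variable {Ω : Type*} [MeasurableSpace Ω] {μ : Measure Ω} {U Y : Ω → ℝ} {F : ℝ → ℝ} {a b : ℝ}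

theorem measure_setOf_le_eq_ofReal [IsFiniteMeasure μ]
    (hYlaw : ∀ y, (μ {ω | Y ω ≤ y}).toReal = F y) (t : ℝ) :
    μ {ω | Y ω ≤ t} = ENNReal.ofReal (F t) := by
  rw [← hYlaw, ENNReal.ofReal_toReal (measure_ne_top _ _)]

theorem setIntegral_sub_quantile_lower_nonneg [IsFiniteMeasure μ] (hF : IsCDF F)
    (hU : Measurable U) (hUlaw : μ.map U = volume.restrict (Ioo 0 1)) (hY : Measurable Y)
    (hYlaw : ∀ y, (μ {ω | Y ω ≤ y}).toReal = F y) (ha : 0 ≤ a) (hb : b ≤ 1)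
    (hint : IntegrableOn (fun ω => Y ω - quantile F (U ω - a)) (U ⁻¹' Ioo a b) μ) :
    0 ≤ ∫ ω in U ⁻¹' Ioo a b, Y ω - quantile F (U ω - a) ∂μ := by
  have hV : AEMeasurable (fun ω => quantile F (U ω - a)) (μ.restrict (U ⁻¹' Ioo a b)) :=
    (hY.aemeasurable.sub hint.aemeasurable).congr (ae_of_all _ fun ω => sub_sub_cancel _ _)
  refine integral_sub_nonneg_of_measure_lt_le hY.aemeasurable hV hint fun t => ?_
  have hA : MeasurableSet (U ⁻¹' Ioo a b) := hU measurableSet_Ioo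
  have hFt := hF.nonneg t
  have hlevel : {ω | t < quantile F (U ω - a)} ∩ U ⁻¹' Ioo a b = U ⁻¹' Ioo (a + F t) b := by
    ext ω
    simp only [mem_inter_iff, mem_ofPred_eq, mem_preimage, mem_Ioo]
    constructor
    · rintro ⟨ht, hau, hub⟩
      have := (hF.lt_quantile_iff ⟨by linarith, by linarith⟩ t).1 ht
      exact ⟨by linarith, hub⟩
    · rintro ⟨hau, hub⟩
      exact ⟨(hF.lt_quantile_iff ⟨by linarith, by linarith⟩ t).2 (by linarith), by linarith, hub⟩
  rw [Measure.restrict_apply' hA, Measure.restrict_apply' hA, hlevel,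
    measure_preimage_Ioo_of_map_eq hU hUlaw (add_nonneg ha hFt) hb]
  calc ENNReal.ofReal (b - (a + F t)) = μ (U ⁻¹' Ioo a b) - μ {ω | Y ω ≤ t} := by
        rw [measure_preimage_Ioo_of_map_eq hU hUlaw ha hb, measure_setOf_le_eq_ofReal hYlaw,
          ← ENNReal.ofReal_sub _ hFt, sub_add_eq_sub_sub]
    _ ≤ μ (U ⁻¹' Ioo a b \ {ω | Y ω ≤ t}) := le_measure_sdiff
    _ = μ ({ω | t < Y ω} ∩ U ⁻¹' Ioo a b) := by
        congr 1
        ext ω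
        simp [and_comm]

theorem setIntegral_quantile_upper_sub_nonneg [IsProbabilityMeasure μ] (hF : IsCDF F)
    (hU : Measurable U) (hUlaw : μ.map U = volume.restrict (Ioo 0 1)) (hY : Measurable Y)
    (hYlaw : ∀ y, (μ {ω | Y ω ≤ y}).toReal = F y) (ha : 0 ≤ a) (hb : b ≤ 1)
    (hint : IntegrableOn (fun ω => quantile F (1 + a - U ω) - Y ω) (U ⁻¹' Ioo a b) μ) :
    0 ≤ ∫ ω in U ⁻¹' Ioo a b, quantile F (1 + a - U ω) - Y ω ∂μ := by
  have hX : AEMeasurable (fun ω => quantile F (1 + a - U ω)) (μ.restrict (U ⁻¹' Ioo a b)) :=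
    (hint.aemeasurable.add hY.aemeasurable).congr (ae_of_all _ fun ω => sub_add_cancel _ _)
  refine integral_sub_nonneg_of_measure_lt_le hX hY.aemeasurable hint fun t => ?_
  have hA : MeasurableSet (U ⁻¹' Ioo a b) := hU measurableSet_Ioo
  have hlevel : {ω | t < quantile F (1 + a - U ω)} ∩ U ⁻¹' Ioo a b =
      U ⁻¹' Ioo a (min b (1 + a - F t)) := by
    ext ω
    simp only [mem_inter_iff, mem_ofPred_eq, mem_preimage, mem_Ioo, lt_min_iff]
    constructor
    · rintro ⟨ht, hau, hub⟩
      have := (hF.lt_quantile_iff ⟨by linarith, by linarith⟩ t).1 ht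
      exact ⟨hau, hub, by linarith⟩
    · rintro ⟨hau, hub, hut⟩
      exact ⟨(hF.lt_quantile_iff ⟨by linarith, by linarith⟩ t).2 (by linarith), hau, hub⟩
  have hYgt : μ {ω | t < Y ω} = ENNReal.ofReal (1 - F t) := by
    have hcompl : {ω | t < Y ω} = {ω | Y ω ≤ t}ᶜ := by
      ext
      simp
    rw [hcompl, prob_compl_eq_one_sub (measurableSet_le hY measurable_const),
      measure_setOf_le_eq_ofReal hYlaw, ← ENNReal.ofReal_one,
      ← ENNReal.ofReal_sub _ (hF.nonneg t)]
  rw [Measure.restrict_apply' hA, Measure.restrict_apply' hA, hlevel,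
    measure_preimage_Ioo_of_map_eq hU hUlaw ha ((min_le_left _ _).trans hb)]
  calc μ ({ω | t < Y ω} ∩ U ⁻¹' Ioo a b) ≤ min (μ {ω | t < Y ω}) (μ (U ⁻¹' Ioo a b)) :=
        le_min (measure_mono inter_subset_left) (measure_mono inter_subset_right)
    _ = ENNReal.ofReal (min b (1 + a - F t) - a) := by
        rw [hYgt, measure_preimage_Ioo_of_map_eq hU hUlaw ha hb, ← ENNReal.ofReal_min,
          ← min_sub_sub_right, min_comm]
        congr 2
        ring

end QuantileCoupling

theorem subgroup_treatment_effect_bounds_general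
    {Ω : Type*} [MeasurableSpace Ω] (μ : Measure Ω) [IsProbabilityMeasure μ]
    (U Y1 : Ω → ℝ) (F1 Q0 Q1 : ℝ → ℝ)
    (hF1 : IsCDF F1)
    (hQ1 : ∀ u, Q1 u = sInf {y : ℝ | u ≤ F1 y})
    (hU : Measurable U) (hUlaw : μ.map U = volume.restrict (Set.Ioo (0:ℝ) 1))
    (hY1 : Measurable Y1) (hY1law : ∀ y, (μ {ω | Y1 ω ≤ y}).toReal = F1 y)
    (a b : ℝ) (ha : 0 ≤ a) (hab : a < b) (hb : b ≤ 1)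
    (hint : IntegrableOn (fun ω => Y1 ω - Q0 (U ω)) {ω | a < U ω ∧ U ω < b} μ)
    (hintL : IntervalIntegrable (fun u => Q1 (u - a) - Q0 u) volume a b)
    (hintU : IntervalIntegrable (fun u => Q1 (1 + a - u) - Q0 u) volume a b) :
    (∫ u in a..b, (Q1 (u - a) - Q0 u)) ≤
        (∫ ω in {ω | a < U ω ∧ U ω < b}, (Y1 ω - Q0 (U ω)) ∂μ) ∧
      (∫ ω in {ω | a < U ω ∧ U ω < b}, (Y1 ω - Q0 (U ω)) ∂μ) ≤
        ∫ u in a..b, (Q1 (1 + a - u) - Q0 u) := by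
  obtain rfl : Q1 = quantile F1 := funext hQ1
  change IntegrableOn _ (U ⁻¹' Ioo a b) μ at hint
  change _ ≤ ∫ ω in U ⁻¹' Ioo a b, _ ∂μ ∧ ∫ ω in U ⁻¹' Ioo a b, _ ∂μ ≤ _
  have hIL := integrableOn_preimage_Ioo_comp_of_map_eq hU hUlaw ha hb hintL
  have hIU := integrableOn_preimage_Ioo_comp_of_map_eq hU hUlaw ha hb hintU
  rw [← setIntegral_preimage_Ioo_comp_of_map_eq hU hUlaw ha hab.le hb hintL,
    ← setIntegral_preimage_Ioo_comp_of_map_eq hU hUlaw ha hab.le hb hintU]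
  constructor
  · rw [← sub_nonneg, ← integral_sub hint hIL]
    simpa only [sub_sub_sub_cancel_right] using
      setIntegral_sub_quantile_lower_nonneg hF1 hU hUlaw hY1 hY1law ha hb
        (by simpa only [Pi.sub_def, sub_sub_sub_cancel_right] using hint.sub hIL)
  · rw [← sub_nonneg, ← integral_sub hIU hint]
    simpa only [sub_sub_sub_cancel_right] using
      setIntegral_quantile_upper_sub_nonneg hF1 hU hUlaw hY1 hY1law ha hb
        (by simpa only [Pi.sub_def, sub_sub_sub_cancel_right] using hIU.sub hint)

theorem subgroup_treatment_effect_bounds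
    {Ω : Type*} [MeasurableSpace Ω] (μ : Measure Ω) [IsProbabilityMeasure μ]
    (U Y1 : Ω → ℝ) (F0 F1 Q0 Q1 : ℝ → ℝ)
    (hF0 : IsCDF F0) (hF1 : IsCDF F1)
    (hQ0 : ∀ u, Q0 u = sInf {y : ℝ | u ≤ F0 y})
    (hQ1 : ∀ u, Q1 u = sInf {y : ℝ | u ≤ F1 y})
    (hU : Measurable U) (hUlaw : μ.map U = volume.restrict (Set.Ioo (0:ℝ) 1))
    (hY1 : Measurable Y1) (hY1law : ∀ y, (μ {ω | Y1 ω ≤ y}).toReal = F1 y)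
    (a b : ℝ) (ha : 0 ≤ a) (hab : a < b) (hb : b ≤ 1)
    (hint : IntegrableOn (fun ω => Y1 ω - Q0 (U ω)) {ω | a < U ω ∧ U ω < b} μ)
    (hintL : IntervalIntegrable (fun u => Q1 (u - a) - Q0 u) volume a b)
    (hintU : IntervalIntegrable (fun u => Q1 (1 + a - u) - Q0 u) volume a b) :
    (∫ u in a..b, (Q1 (u - a) - Q0 u)) ≤
        (∫ ω in {ω | a < U ω ∧ U ω < b}, (Y1 ω - Q0 (U ω)) ∂μ) ∧
      (∫ ω in {ω | a < U ω ∧ U ω < b}, (Y1 ω - Q0 (U ω)) ∂μ) ≤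
        ∫ u in a..b, (Q1 (1 + a - u) - Q0 u) :=
  subgroup_treatment_effect_bounds_general μ U Y1 F1 Q0 Q1 hF1 hQ1 hU hUlaw hY1 hY1law a b ha hab hb
    hint hintL hintU
end
end
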